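/- arXiv:1109.0187 — 3 statements merged into one kernel-verified Lean document; each statement's English description precedes it below -/
import Mathlib

section
/- Let A and B be proper open convex sets in R^n and R^m with Hilbert distances d_A, d_B, and let d_{A×B} be the Hilbert distance of the product A × B ⊆ R^{n+m}. Then the identity map from (A × B, d_{A×B}) to the product metric space (A, d_A) × (B, d_B) equipped with the max-distance is 2-bi-Lipschitz; more precisely, max(d_A(p_A,q_A), d_B(p_B,q_B)) ≤ d_{A×B}(p,q) ≤ d_A(p_A,q_A) + d_B(p_B,q_B) for all p = (p_A,p_B), q = (q_A,q_B) in A × B. -/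
open scoped ENNReal
open MeasureTheory

noncomputable section

/-- Exit time of the open convex set `A` from `p` in direction `v`:
`sup {t > 0 : p + t • v ∈ A}` in `ℝ≥0∞` (so it is `∞` when the ray stays in `A`). -/
def exitTime {V : Type*} [AddCommGroup V] [Module ℝ V] (A : Set V) (p v : V) : ℝ≥0∞ :=
  ⨆ t ∈ {t : ℝ | 0 < t ∧ p + t • v ∈ A}, ENNReal.ofReal t

/-- The Hilbert–Finsler norm `F_A(p,v) = (1/2)(1/t⁺ + 1/t⁻)`, with `1/∞ = 0`. -/
def finsler {V : Type*} [AddCommGroup V] [Module ℝ V] (A : Set V) (p v : V) : ℝ :=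
  ((exitTime A p v)⁻¹ + (exitTime A p (-v))⁻¹).toReal / 2

/-- `A` contains no affine line (properness). -/
def LineFree {V : Type*} [AddCommGroup V] [Module ℝ V] (A : Set V) : Prop :=
  ¬ ∃ p v : V, v ≠ 0 ∧ ∀ t : ℝ, p + t • v ∈ A

open Classical in
/-- The Hilbert distance of `A`, written via the exit times `t⁺ = exitTime A p (q-p)`,
`t⁻ = exitTime A p (p-q)`: the cross-ratio of `(a,p,q,b)` equals
`(t⁺/(t⁺-1)) · ((t⁻+1)/t⁻)`, factors involving a boundary point at infinity being `1`. -/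
def hilbertDist {V : Type*} [AddCommGroup V] [Module ℝ V] (A : Set V) (p q : V) : ℝ :=
  if p = q then 0 else
    (1 / 2) * Real.log
      ((if exitTime A p (q - p) = ∞ then 1 else
          (exitTime A p (q - p)).toReal / ((exitTime A p (q - p)).toReal - 1)) *
       (if exitTime A p (p - q) = ∞ then 1 else
          ((exitTime A p (p - q)).toReal + 1) / (exitTime A p (p - q)).toReal))

/-- Open ball of the Hilbert distance. -/
def hilbertBall {V : Type*} [AddCommGroup V] [Module ℝ V] (A : Set V) (p : V) (R : ℝ) :
    Set V :=
  {q ∈ A | hilbertDist A p q < R}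

/-! The exit time of `A × B` from `p` in direction `v` is the smaller of the two exit times,
because by convexity the admissible times form initial segments of `(0, ∞)`. Both cross-ratio
factors `t/(t-1)` and `(t+1)/t` decrease in the exit time `t`, so each factor for `A × B` is the
maximum of the corresponding factors for `A` and `B`. As all factors are `≥ 1`, the bounds follow
from `max (ab) (cd) ≤ max a c * max b d ≤ ab * cd` for `a, b, c, d ≥ 1`. -/

open Set Topology Real

lemma AntitoneOn.map_min_of_mem {α β : Type*} [LinearOrder α] [LinearOrder β] {f : α → β}
    {s : Set α} (hf : AntitoneOn f s) {a b : α} (ha : a ∈ s) (hb : b ∈ s) :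
    f (min a b) = max (f a) (f b) := by
  rcases le_total a b with h | h
  · rw [min_eq_left h, max_eq_left (hf ha hb h)]
  · rw [min_eq_right h, max_eq_right (hf hb ha h)]

section ExitTime

variable {V : Type*} [AddCommGroup V] [Module ℝ V] {A : Set V} {p v : V}

lemma ofReal_le_exitTime {t : ℝ} (ht : 0 < t) (h : p + t • v ∈ A) :
    ENNReal.ofReal t ≤ exitTime A p v :=
  le_iSup₂ (f := fun t (_ : t ∈ {t : ℝ | 0 < t ∧ p + t • v ∈ A}) => ENNReal.ofReal t) t ⟨ht, h⟩

lemma exitTime_zero (hp : p ∈ A) : exitTime A p 0 = ∞ :=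
  ENNReal.eq_top_of_forall_nnreal_le fun r => calc
    (r : ℝ≥0∞) ≤ ENNReal.ofReal (r + 1) := by
      rw [← ENNReal.ofReal_coe_nnreal]; exact ENNReal.ofReal_le_ofReal (by linarith)
    _ ≤ exitTime A p 0 := ofReal_le_exitTime (by positivity) (by simpa using hp)

lemma Convex.add_smul_mem_of_ofReal_lt_exitTime (hA : Convex ℝ A) (hp : p ∈ A) {s : ℝ}
    (hs : 0 ≤ s) (h : ENNReal.ofReal s < exitTime A p v) : p + s • v ∈ A := by
  obtain ⟨t, ⟨ht, htA⟩, hst⟩ := lt_biSup_iff.1 h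
  have hst : s < t := (ENNReal.ofReal_lt_ofReal_iff ht).1 hst
  have := hA.add_smul_mem hp htA ⟨div_nonneg hs ht.le, div_le_one_of_le₀ hst.le ht.le⟩
  rwa [smul_smul, div_mul_cancel₀ s ht.ne'] at this

lemma Convex.exitTime_prod {W : Type*} [AddCommGroup W] [Module ℝ W] {B : Set W}
    (hA : Convex ℝ A) (hB : Convex ℝ B) {p : V × W} (hp : p ∈ A ×ˢ B) (v : V × W) :
    exitTime (A ×ˢ B) p v = min (exitTime A p.1 v.1) (exitTime B p.2 v.2) := by
  refine le_antisymm (le_min ?_ ?_) (le_of_forall_lt fun c hc => ?_)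
  · exact biSup_mono fun t ht => ⟨ht.1, ht.2.1⟩
  · exact biSup_mono fun t ht => ⟨ht.1, ht.2.2⟩
  obtain ⟨s, hs, hcs, hsv⟩ := ENNReal.lt_iff_exists_real_btwn.1 hc
  rw [lt_min_iff] at hsv
  refine hcs.trans_le (ofReal_le_exitTime (ENNReal.ofReal_pos.1 (pos_of_gt hcs)) ?_)
  exact ⟨hA.add_smul_mem_of_ofReal_lt_exitTime hp.1 hs hsv.1,
    hB.add_smul_mem_of_ofReal_lt_exitTime hp.2 hs hsv.2⟩

variable [TopologicalSpace V] [ContinuousAdd V] [ContinuousSMul ℝ V]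

lemma IsOpen.ofReal_lt_exitTime (hA : IsOpen A) {t : ℝ} (ht : 0 ≤ t) (h : p + t • v ∈ A) :
    ENNReal.ofReal t < exitTime A p v := by
  have hnhds : ∀ᶠ s in 𝓝 t, p + s • v ∈ A := (hA.preimage (by fun_prop)).mem_nhds h
  obtain ⟨s, hts, hs⟩ := hnhds.exists_gt
  exact ((ENNReal.ofReal_lt_ofReal_iff (by linarith)).2 hts).trans_le
    (ofReal_le_exitTime (by linarith) hs)

lemma IsOpen.exitTime_pos (hA : IsOpen A) (hp : p ∈ A) : 0 < exitTime A p v := by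
  simpa using hA.ofReal_lt_exitTime le_rfl (v := v) (by simpa using hp)

lemma IsOpen.one_lt_exitTime (hA : IsOpen A) {q : V} (hq : q ∈ A) :
    1 < exitTime A p (q - p) := by
  simpa using hA.ofReal_lt_exitTime zero_le_one (by simpa using hq)

end ExitTime

def forwardFactor (e : ℝ≥0∞) : ℝ := if e = ∞ then 1 else e.toReal / (e.toReal - 1)

def backwardFactor (e : ℝ≥0∞) : ℝ := if e = ∞ then 1 else (e.toReal + 1) / e.toReal

lemma forwardFactor_antitoneOn : AntitoneOn forwardFactor (Ioi 1) := by
  intro e he f _ hef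
  rcases eq_or_ne e ∞ with rfl | hne
  · rw [top_le_iff.1 hef]
  have he' : 1 < e.toReal := by
    simpa using (ENNReal.toReal_lt_toReal ENNReal.one_ne_top hne).2 he
  rcases eq_or_ne f ∞ with rfl | hf
  · rw [forwardFactor, forwardFactor, if_pos rfl, if_neg hne, le_div_iff₀ (by linarith)]
    linarith
  · have hle : e.toReal ≤ f.toReal := (ENNReal.toReal_le_toReal hne hf).2 hef
    rw [forwardFactor, forwardFactor, if_neg hf, if_neg hne,
      div_le_div_iff₀ (by linarith) (by linarith)]
    nlinarith

lemma backwardFactor_antitoneOn : AntitoneOn backwardFactor (Ioi 0) := by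
  intro e he f _ hef
  rcases eq_or_ne e ∞ with rfl | hne
  · rw [top_le_iff.1 hef]
  have he' : 0 < e.toReal := ENNReal.toReal_pos he.ne' hne
  rcases eq_or_ne f ∞ with rfl | hf
  · rw [backwardFactor, backwardFactor, if_pos rfl, if_neg hne, le_div_iff₀ he']
    linarith
  · have hle : e.toReal ≤ f.toReal := (ENNReal.toReal_le_toReal hne hf).2 hef
    rw [backwardFactor, backwardFactor, if_neg hf, if_neg hne, div_le_div_iff₀ (by linarith) he']
    nlinarith

lemma one_le_forwardFactor {e : ℝ≥0∞} (he : 1 < e) : 1 ≤ forwardFactor e := by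
  simpa [forwardFactor] using forwardFactor_antitoneOn he ENNReal.one_lt_top le_top

lemma one_le_backwardFactor {e : ℝ≥0∞} (he : 0 < e) : 1 ≤ backwardFactor e := by
  simpa [backwardFactor] using backwardFactor_antitoneOn he ENNReal.zero_lt_top le_top

lemma hilbertDist_eq_log_forwardFactor_mul_backwardFactor {V : Type*} [AddCommGroup V]
    [Module ℝ V] {A : Set V} {p : V} (hp : p ∈ A) (q : V) :
    hilbertDist A p q = (1 / 2) * log (forwardFactor (exitTime A p (q - p)) *
      backwardFactor (exitTime A p (p - q))) := by
  rcases eq_or_ne p q with rfl | h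
  · simp [hilbertDist, forwardFactor, backwardFactor, exitTime_zero hp]
  · rw [hilbertDist, if_neg h]; rfl

lemma hilbertDist_prod_eq_log_max_mul_max {V W : Type*} [AddCommGroup V] [Module ℝ V]
    [TopologicalSpace V] [ContinuousAdd V] [ContinuousSMul ℝ V] [AddCommGroup W] [Module ℝ W]
    [TopologicalSpace W] [ContinuousAdd W] [ContinuousSMul ℝ W] {A : Set V} {B : Set W}
    (hAo : IsOpen A) (hAc : Convex ℝ A) (hBo : IsOpen B) (hBc : Convex ℝ B) {p q : V × W}
    (hp : p ∈ A ×ˢ B) (hq : q ∈ A ×ˢ B) :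
    hilbertDist (A ×ˢ B) p q =
      (1 / 2) * log (max (forwardFactor (exitTime A p.1 (q.1 - p.1)))
          (forwardFactor (exitTime B p.2 (q.2 - p.2))) *
        max (backwardFactor (exitTime A p.1 (p.1 - q.1)))
          (backwardFactor (exitTime B p.2 (p.2 - q.2)))) := by
  rw [hilbertDist_eq_log_forwardFactor_mul_backwardFactor hp, hAc.exitTime_prod hBc hp,
    hAc.exitTime_prod hBc hp, Prod.fst_sub, Prod.snd_sub, Prod.fst_sub, Prod.snd_sub,
    forwardFactor_antitoneOn.map_min_of_mem
      (hAo.one_lt_exitTime hq.1) (hBo.one_lt_exitTime hq.2),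
    backwardFactor_antitoneOn.map_min_of_mem (hAo.exitTime_pos hp.1) (hBo.exitTime_pos hp.2)]

lemma max_log_mul_le_log_max_mul_max {a b c d : ℝ} (ha : 0 < a) (hb : 0 < b) (hc : 0 < c)
    (hd : 0 < d) : max (log (a * b)) (log (c * d)) ≤ log (max a c * max b d) :=
  max_le
    (log_le_log (by positivity) (mul_le_mul (le_max_left _ _) (le_max_left _ _) hb.le
      (by positivity)))
    (log_le_log (by positivity) (mul_le_mul (le_max_right _ _) (le_max_right _ _) hd.le
      (by positivity)))

lemma log_max_mul_max_le {a b c d : ℝ} (ha : 1 ≤ a) (hb : 1 ≤ b) (hc : 1 ≤ c) (hd : 1 ≤ d) :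
    log (max a c * max b d) ≤ log (a * b) + log (c * d) := by
  have hac : max a c ≤ a * c := max_le (le_mul_of_one_le_right (by linarith) hc)
    (le_mul_of_one_le_left (by linarith) ha)
  have hbd : max b d ≤ b * d := max_le (le_mul_of_one_le_right (by linarith) hd)
    (le_mul_of_one_le_left (by linarith) hb)
  rw [← log_mul (by positivity) (by positivity)]
  refine log_le_log (by positivity) ?_
  calc max a c * max b d ≤ (a * c) * (b * d) := by gcongr
    _ = a * b * (c * d) := by ring

theorem hilbertDist_prod_general {n m : ℕ}
    (A : Set (EuclideanSpace ℝ (Fin n))) (B : Set (EuclideanSpace ℝ (Fin m)))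
    (hAo : IsOpen A) (hAc : Convex ℝ A)
    (hBo : IsOpen B) (hBc : Convex ℝ B)
    (p q : EuclideanSpace ℝ (Fin n) × EuclideanSpace ℝ (Fin m))
    (hp : p ∈ A ×ˢ B) (hq : q ∈ A ×ˢ B) :
    max (hilbertDist A p.1 q.1) (hilbertDist B p.2 q.2) ≤ hilbertDist (A ×ˢ B) p q ∧
      hilbertDist (A ×ˢ B) p q ≤ hilbertDist A p.1 q.1 + hilbertDist B p.2 q.2 := by
  have ha := one_le_forwardFactor (hAo.one_lt_exitTime (p := p.1) hq.1)
  have hb := one_le_backwardFactor (hAo.exitTime_pos (v := p.1 - q.1) hp.1)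
  have hc := one_le_forwardFactor (hBo.one_lt_exitTime (p := p.2) hq.2)
  have hd := one_le_backwardFactor (hBo.exitTime_pos (v := p.2 - q.2) hp.2)
  rw [hilbertDist_prod_eq_log_max_mul_max hAo hAc hBo hBc hp hq,
    hilbertDist_eq_log_forwardFactor_mul_backwardFactor hp.1,
    hilbertDist_eq_log_forwardFactor_mul_backwardFactor hp.2,
    ← mul_max_of_nonneg _ _ (by norm_num)]
  constructor
  · gcongr
    exact max_log_mul_le_log_max_mul_max (by linarith) (by linarith) (by linarith) (by linarith)
  · have := log_max_mul_max_le ha hb hc hd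
    linarith

/-- for proper open convex `A ⊆ ℝⁿ`, `B ⊆ ℝᵐ`,
`max(d_A(p₁,q₁), d_B(p₂,q₂)) ≤ d_{A×B}(p,q) ≤ d_A(p₁,q₁) + d_B(p₂,q₂)`;
in particular the identity is 2-bi-Lipschitz onto the max-distance product. -/
theorem hilbertDist_prod {n m : ℕ}
    (A : Set (EuclideanSpace ℝ (Fin n))) (B : Set (EuclideanSpace ℝ (Fin m)))
    (hAo : IsOpen A) (hAc : Convex ℝ A) (hAl : LineFree A)
    (hBo : IsOpen B) (hBc : Convex ℝ B) (hBl : LineFree B)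
    (p q : EuclideanSpace ℝ (Fin n) × EuclideanSpace ℝ (Fin m))
    (hp : p ∈ A ×ˢ B) (hq : q ∈ A ×ˢ B) :
    max (hilbertDist A p.1 q.1) (hilbertDist B p.2 q.2) ≤ hilbertDist (A ×ˢ B) p q ∧
      hilbertDist (A ×ˢ B) p q ≤ hilbertDist A p.1 q.1 + hilbertDist B p.2 q.2 :=
  hilbertDist_prod_general A B hAo hAc hBo hBc p q hp hq
end
end

section
/- Let C = (−1,1)^n be the open n-dimensional cube. For every x = (x₁,…,x_n) ∈ C, the Lebesgue volume of the tangent unit ball T_xB(1) = {v ∈ R^n : F_C(x,v) < 1} of the Hilbert–Finsler norm satisfies (2^n/n!) Π_{i=1}^n (1 − xᵢ²) ≤ Leb(T_xB(1)) ≤ 2^n Π_{i=1}^n (1 − xᵢ²). -/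
open scoped ENNReal
open MeasureTheory

noncomputable section

/-- The open cube `(-1,1)ⁿ`. -/
def cube (n : ℕ) : Set (EuclideanSpace ℝ (Fin n)) :=
  {x | ∀ i, x i ∈ Set.Ioo (-1 : ℝ) 1}

/-!
Along a ray from `x`, the cube is left as soon as one coordinate leaves `(-1, 1)`, so the
reciprocal exit time in direction `v` is the largest of the one-dimensional ones. Since the
one-dimensional Finsler norm at `xᵢ` is `|vᵢ| / (1 - xᵢ²)`, the Finsler norm of the cube lies
between the maximum and the sum of these. Hence the unit ball lies between the weighted
`ℓ¹`-ball and the box `∏ (-(1 - xᵢ²), 1 - xᵢ²)`, whose volumes are `2ⁿ/n! ∏ (1 - xᵢ²)` and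
`2ⁿ ∏ (1 - xᵢ²)`.
-/

open Set

lemma ENNReal.ofReal_lt_inv_ofReal_iff {t a : ℝ} (ha : 0 ≤ a) :
    ENNReal.ofReal t < (ENNReal.ofReal a)⁻¹ ↔ t * a < 1 := by
  rcases ha.eq_or_lt with rfl | ha
  · simp
  · rw [← ENNReal.ofReal_inv_of_pos ha, ENNReal.ofReal_lt_ofReal_iff (inv_pos.2 ha), ← one_div,
      lt_div_iff₀ ha]

lemma ENNReal.iSup_ofReal_of_pos_of_lt (b : ℝ≥0∞) :
    ⨆ t ∈ {t : ℝ | 0 < t ∧ ENNReal.ofReal t < b}, ENNReal.ofReal t = b := by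
  refine le_antisymm (iSup₂_le fun t ht => ht.2.le) (le_of_forall_lt fun c hc => ?_)
  obtain ⟨r, -, hcr, hrb⟩ := ENNReal.lt_iff_exists_real_btwn.1 hc
  have hr : 0 < r := ENNReal.ofReal_pos.1 (zero_le.trans_lt hcr)
  exact hcr.trans_le (le_iSup₂ (f := fun t (_ : t ∈ {t : ℝ | 0 < t ∧ _}) => ENNReal.ofReal t)
    r ⟨hr, hrb⟩)

lemma Real.iSup_lt_iff_of_finite {ι : Type*} [Finite ι] {f : ι → ℝ} {c : ℝ} (hc : 0 < c) :
    ⨆ i, f i < c ↔ ∀ i, f i < c := by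
  refine ⟨fun h i => (le_ciSup (Finite.bddAbove_range f) i).trans_lt h, fun h => ?_⟩
  cases isEmpty_or_nonempty ι
  · rwa [Real.iSup_of_isEmpty]
  · obtain ⟨j, hj⟩ := exists_eq_ciSup_of_finite (f := f)
    exact hj ▸ h j

section ExitTime

variable {V : Type*} [AddCommGroup V] [Module ℝ V] {A : Set V} {p v : V}

lemma exitTime_eq_inv_ofReal {a : ℝ} (ha : 0 ≤ a)
    (h : ∀ t : ℝ, 0 < t → (p + t • v ∈ A ↔ t * a < 1)) :
    exitTime A p v = (ENNReal.ofReal a)⁻¹ := by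
  have hset : {t : ℝ | 0 < t ∧ p + t • v ∈ A} =
      {t : ℝ | 0 < t ∧ ENNReal.ofReal t < (ENNReal.ofReal a)⁻¹} := by
    ext t
    exact and_congr_right fun ht => (h t ht).trans (ENNReal.ofReal_lt_inv_ofReal_iff ha).symm
  rw [exitTime, hset, ENNReal.iSup_ofReal_of_pos_of_lt]

lemma finsler_eq_of_exit_rates {a b : ℝ} (ha : 0 ≤ a) (hb : 0 ≤ b)
    (hv : ∀ t : ℝ, 0 < t → (p + t • v ∈ A ↔ t * a < 1))
    (hnv : ∀ t : ℝ, 0 < t → (p + t • (-v) ∈ A ↔ t * b < 1)) :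
    finsler A p v = (a + b) / 2 := by
  rw [finsler, exitTime_eq_inv_ofReal ha hv, exitTime_eq_inv_ofReal hb hnv, inv_inv, inv_inv,
    ← ENNReal.ofReal_add ha hb, ENNReal.toReal_ofReal (add_nonneg ha hb)]

end ExitTime

section Interval

variable {y : ℝ}

/-- The reciprocal of the time at which `y + t * w` leaves `(-1, 1)`. -/
def intervalExitRate (y w : ℝ) : ℝ :=
  max (w / (1 - y)) (-w / (1 + y))

lemma intervalExitRate_nonneg (hy : y ∈ Ioo (-1) 1) (w : ℝ) : 0 ≤ intervalExitRate y w := by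
  have h₁ : 0 < 1 - y := by linarith [hy.2]
  have h₂ : 0 < 1 + y := by linarith [hy.1]
  rcases le_total 0 w with hw | hw
  · exact le_max_of_le_left (div_nonneg hw h₁.le)
  · exact le_max_of_le_right (div_nonneg (neg_nonneg.2 hw) h₂.le)

lemma add_mul_mem_Ioo_iff (hy : y ∈ Ioo (-1) 1) {t : ℝ} (ht : 0 < t) (w : ℝ) :
    y + t * w ∈ Ioo (-1) 1 ↔ t * intervalExitRate y w < 1 := by
  have h₁ : 0 < 1 - y := by linarith [hy.2]
  have h₂ : 0 < 1 + y := by linarith [hy.1]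
  rw [intervalExitRate, mul_max_of_nonneg _ _ ht.le, max_lt_iff, ← mul_div_assoc,
    ← mul_div_assoc, div_lt_one h₁, div_lt_one h₂, mem_Ioo]
  constructor <;> rintro ⟨_, _⟩ <;> constructor <;> linarith

lemma intervalExitRate_add_neg (hy : y ∈ Ioo (-1) 1) (w : ℝ) :
    intervalExitRate y w + intervalExitRate y (-w) = 2 * (|w| / (1 - y ^ 2)) := by
  have h₁ : 0 < 1 - y := by linarith [hy.2]
  have h₂ : 0 < 1 + y := by linarith [hy.1]
  have hsq : 1 - y ^ 2 = (1 - y) * (1 + y) := by ring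
  rw [intervalExitRate, intervalExitRate, neg_neg, hsq]
  rcases le_total 0 w with hw | hw
  · rw [max_eq_left (by rw [div_le_div_iff₀ h₂ h₁]; nlinarith),
      max_eq_right (by rw [div_le_div_iff₀ h₁ h₂]; nlinarith), abs_of_nonneg hw]
    field_simp
    ring
  · rw [max_eq_right (by rw [div_le_div_iff₀ h₁ h₂]; nlinarith),
      max_eq_left (by rw [div_le_div_iff₀ h₂ h₁]; nlinarith), abs_of_nonpos hw]
    field_simp
    ring

end Interval

section Cube

variable {n : ℕ} {x : EuclideanSpace ℝ (Fin n)}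

lemma add_smul_mem_cube_iff (hx : x ∈ cube n) (v : EuclideanSpace ℝ (Fin n)) {t : ℝ}
    (ht : 0 < t) : x + t • v ∈ cube n ↔ t * ⨆ i, intervalExitRate (x i) (v i) < 1 := by
  rw [Real.mul_iSup_of_nonneg ht.le, Real.iSup_lt_iff_of_finite one_pos]
  simp only [cube, mem_ofPred_eq, PiLp.add_apply, PiLp.smul_apply, smul_eq_mul]
  exact forall_congr' fun i => add_mul_mem_Ioo_iff (hx i) ht (v i)

lemma finsler_cube (hx : x ∈ cube n) (v : EuclideanSpace ℝ (Fin n)) :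
    finsler (cube n) x v =
      ((⨆ i, intervalExitRate (x i) (v i)) + ⨆ i, intervalExitRate (x i) (-v i)) / 2 := by
  refine finsler_eq_of_exit_rates (Real.iSup_nonneg fun i => intervalExitRate_nonneg (hx i) _)
    (Real.iSup_nonneg fun i => intervalExitRate_nonneg (hx i) _)
    (fun t ht => add_smul_mem_cube_iff hx v ht) (fun t ht => ?_)
  simpa only [PiLp.neg_apply] using add_smul_mem_cube_iff hx (-v) ht

lemma abs_div_le_finsler_cube (hx : x ∈ cube n) (v : EuclideanSpace ℝ (Fin n)) (i : Fin n) :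
    |v i| / (1 - x i ^ 2) ≤ finsler (cube n) x v := by
  have h_v := le_ciSup (Finite.bddAbove_range fun i => intervalExitRate (x i) (v i)) i
  have h_nv := le_ciSup (Finite.bddAbove_range fun i => intervalExitRate (x i) (-v i)) i
  rw [finsler_cube hx]
  linarith [intervalExitRate_add_neg (hx i) (v i)]

lemma finsler_cube_le_sum (hx : x ∈ cube n) (v : EuclideanSpace ℝ (Fin n)) :
    finsler (cube n) x v ≤ ∑ i, |v i| / (1 - x i ^ 2) := by
  have hsup (w : Fin n → ℝ) :
      ⨆ i, intervalExitRate (x i) (w i) ≤ ∑ i, intervalExitRate (x i) (w i) :=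
    Real.iSup_le (fun i => Finset.single_le_sum (fun j _ => intervalExitRate_nonneg (hx j) (w j))
      (Finset.mem_univ i)) (Finset.sum_nonneg fun j _ => intervalExitRate_nonneg (hx j) (w j))
  calc finsler (cube n) x v
      = ((⨆ i, intervalExitRate (x i) (v i)) + ⨆ i, intervalExitRate (x i) (-v i)) / 2 :=
        finsler_cube hx v
    _ ≤ ((∑ i, intervalExitRate (x i) (v i)) + ∑ i, intervalExitRate (x i) (-v i)) / 2 := by
        gcongr <;> exact hsup _
    _ = ∑ i, |v i| / (1 - x i ^ 2) := by
        rw [← Finset.sum_add_distrib, Finset.sum_div]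
        refine Finset.sum_congr rfl fun i _ => ?_
        rw [intervalExitRate_add_neg (hx i)]
        ring

end Cube

section Volume

variable {ι : Type*} [Fintype ι]

lemma EuclideanSpace.volume_setOf_forall_abs_lt {c : ι → ℝ} (hc : ∀ i, 0 ≤ c i) :
    volume {v : EuclideanSpace ℝ ι | ∀ i, |v i| < c i} =
      ENNReal.ofReal (2 ^ Fintype.card ι * ∏ i, c i) := by
  have h : {v : EuclideanSpace ℝ ι | ∀ i, |v i| < c i} =
      (MeasurableEquiv.toLp 2 (ι → ℝ)).symm ⁻¹' univ.pi fun i => Ioo (-c i) (c i) := by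
    ext v
    simp [mem_pi, abs_lt]
  rw [h, (EuclideanSpace.volume_preserving_symm_measurableEquiv_toLp ι).measure_preimage
      (MeasurableSet.univ_pi fun _ => measurableSet_Ioo).nullMeasurableSet,
    volume_pi_pi]
  simp_rw [Real.volume_Ioo, sub_neg_eq_add, ← two_mul]
  rw [← ENNReal.ofReal_prod_of_nonneg fun i _ => by linarith [hc i], Finset.prod_mul_distrib,
    Finset.prod_const, Finset.card_univ]

lemma EuclideanSpace.volume_setOf_sum_abs_div_lt_one {c : ι → ℝ} (hc : ∀ i, 0 < c i) :
    volume {v : EuclideanSpace ℝ ι | ∑ i, |v i| / c i < 1} =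
      ENNReal.ofReal (2 ^ Fintype.card ι / (Fintype.card ι).factorial * ∏ i, c i) := by
  classical
  have hmeas : MeasurableSet {y : ι → ℝ | ∑ i, |y i| / c i < 1} :=
    measurableSet_lt (Finset.measurable_sum _ fun i _ => (measurable_pi_apply i).abs.div_const _)
      measurable_const
  rw [show {v : EuclideanSpace ℝ ι | ∑ i, |v i| / c i < 1} =
      (MeasurableEquiv.toLp 2 (ι → ℝ)).symm ⁻¹' {y : ι → ℝ | ∑ i, |y i| / c i < 1} from rfl,
    (EuclideanSpace.volume_preserving_symm_measurableEquiv_toLp ι).measure_preimage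
      hmeas.nullMeasurableSet]
  set g : (ι → ℝ) →ₗ[ℝ] ι → ℝ := Matrix.toLin' (Matrix.diagonal fun i => (c i)⁻¹)
  have hg : {y : ι → ℝ | ∑ i, |y i| / c i < 1} = g ⁻¹' {y | ∑ i, |y i| ^ (1 : ℝ) < 1} := by
    ext y
    simp only [mem_preimage, mem_ofPred_eq, g, Matrix.toLin'_apply, Matrix.mulVec_diagonal,
      Real.rpow_one, inv_mul_eq_div, abs_div, abs_of_pos (hc _)]
  have hdet : LinearMap.det g = ∏ i, (c i)⁻¹ := by
    rw [LinearMap.det_toLin', Matrix.det_diagonal]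
  have hpos : 0 < ∏ i, (c i)⁻¹ := Finset.prod_pos fun i _ => inv_pos.2 (hc i)
  rw [hg, Measure.addHaar_preimage_linearMap volume (hdet ▸ hpos.ne'),
    volume_sum_rpow_lt_one ι le_rfl, hdet, ← ENNReal.ofReal_mul (abs_nonneg _),
    abs_of_pos (inv_pos.2 hpos), Finset.prod_inv_distrib, inv_inv]
  norm_num [Real.Gamma_nat_eq_factorial]
  ring

end Volume

/-- `(2ⁿ/n!) Π (1 - xᵢ²) ≤ Leb(T_xB(1)) ≤ 2ⁿ Π (1 - xᵢ²)` for the cube. -/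
theorem cube_unit_ball_volume {n : ℕ} (x : EuclideanSpace ℝ (Fin n)) (hx : x ∈ cube n) :
    2 ^ n / (Nat.factorial n : ℝ) * ∏ i, (1 - x i ^ 2) ≤
        (volume {v : EuclideanSpace ℝ (Fin n) | finsler (cube n) x v < 1}).toReal ∧
      (volume {v : EuclideanSpace ℝ (Fin n) | finsler (cube n) x v < 1}).toReal ≤
        2 ^ n * ∏ i, (1 - x i ^ 2) := by
  have hc (i : Fin n) : 0 < 1 - x i ^ 2 := by
    nlinarith [(hx i).1, (hx i).2]
  have h_upper : volume {v : EuclideanSpace ℝ (Fin n) | finsler (cube n) x v < 1} ≤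
      ENNReal.ofReal (2 ^ n * ∏ i, (1 - x i ^ 2)) := by
    have h_box := EuclideanSpace.volume_setOf_forall_abs_lt fun i => (hc i).le
    rw [Fintype.card_fin] at h_box
    exact h_box ▸ measure_mono fun v hv i =>
      (div_lt_one (hc i)).1 ((abs_div_le_finsler_cube hx v i).trans_lt hv)
  have h_lower : ENNReal.ofReal (2 ^ n / (Nat.factorial n : ℝ) * ∏ i, (1 - x i ^ 2)) ≤
      volume {v : EuclideanSpace ℝ (Fin n) | finsler (cube n) x v < 1} := by
    have h_ball := EuclideanSpace.volume_setOf_sum_abs_div_lt_one hc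
    rw [Fintype.card_fin] at h_ball
    exact h_ball ▸ measure_mono fun v hv => (finsler_cube_le_sum hx v).trans_lt hv
  refine ⟨?_, ?_⟩
  · exact (ENNReal.ofReal_le_iff_le_toReal (ne_top_of_le_ne_top ENNReal.ofReal_ne_top h_upper)).1
      h_lower
  · exact ENNReal.toReal_le_of_le_ofReal
      (mul_nonneg (by positivity) (Finset.prod_nonneg fun i _ => (hc i).le)) h_upper
end
end

section
/- Let A ⊆ R^n × {0} ⊆ R^{n+1} be a bounded open convex set and let p ∈ R^{n+1} with p ∉ R^n × {0}. Then the open cone over A with apex p, defined as cone(p, A) = {p + t(a − p) : a ∈ A, t > 0} (equivalently the union of open rays from p through points of A), is projectively equivalent to the product A × (0, ∞); in particular there is a projective transformation of RP^{n+1} carrying one onto the other. -/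
noncomputable section

def coneT {n : ℕ} (p : EuclideanSpace ℝ (Fin n) × ℝ) (hp : p.2 ≠ 0) :
    ((EuclideanSpace ℝ (Fin n) × ℝ) × ℝ) ≃ₗ[ℝ] (EuclideanSpace ℝ (Fin n) × ℝ) × ℝ where
  toFun z := ((z.1.1 - (z.1.2 / p.2) • p.1, z.2), z.2 - z.1.2 / p.2)
  invFun z := ((z.1.1 + (z.1.2 - z.2) • p.1, (z.1.2 - z.2) * p.2), z.1.2)
  map_add' := by
    rintro ⟨⟨u, v⟩, w⟩ ⟨⟨u', v'⟩, w'⟩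
    simp only [Prod.mk_add_mk, Prod.mk.injEq]
    refine ⟨⟨?_, trivial⟩, by ring⟩
    rw [add_div, add_smul]; abel
  map_smul' := by
    rintro c ⟨⟨u, v⟩, w⟩
    simp only [Prod.smul_mk, Prod.mk.injEq, RingHom.id_apply, smul_eq_mul, smul_sub, smul_smul]
    refine ⟨⟨?_, trivial⟩, by ring⟩
    rw [mul_div_assoc]
  left_inv := by
    rintro ⟨⟨u, v⟩, w⟩
    simp only [Prod.mk.injEq]
    refine ⟨⟨?_, ?_⟩, trivial⟩
    · have h : w - (w - v / p.2) = v / p.2 := by ring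
      rw [h, sub_add_cancel]
    · field_simp; ring
  right_inv := by
    rintro ⟨⟨u, v⟩, w⟩
    simp only [Prod.mk.injEq]
    have h1 : v - (v - w) * p.2 / p.2 = w := by field_simp; ring
    have h2 : (v - w) * p.2 / p.2 = v - w := by field_simp
    refine ⟨⟨?_, trivial⟩, h1⟩
    rw [h2, add_sub_cancel_right]

/-- the open cone with apex `p` over a bounded open convex set `A` placed in
the hyperplane `ℝⁿ × {0} ⊆ ℝⁿ⁺¹` (with `p` outside that hyperplane) is projectively
equivalent to `A × (0,∞)`: some linear automorphism of `ℝⁿ⁺² = (ℝⁿ × ℝ) × ℝ`, acting on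
homogeneous coordinates, carries the cone exactly onto `A × (0,∞)`. -/
theorem cone_projEquiv_prod {n : ℕ}
    (A : Set (EuclideanSpace ℝ (Fin n)))
    (hAb : Bornology.IsBounded A) (hAo : IsOpen A) (hAc : Convex ℝ A)
    (p : EuclideanSpace ℝ (Fin n) × ℝ) (hp : p.2 ≠ 0) :
    ∃ T : ((EuclideanSpace ℝ (Fin n) × ℝ) × ℝ) ≃ₗ[ℝ]
        (EuclideanSpace ℝ (Fin n) × ℝ) × ℝ,
      ∀ x : EuclideanSpace ℝ (Fin n) × ℝ,
        (∃ a ∈ A, ∃ t : ℝ, 0 < t ∧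
            x = p + t • (((a, (0 : ℝ)) : EuclideanSpace ℝ (Fin n) × ℝ) - p)) ↔
          ∃ c : ℝ, c ≠ 0 ∧ ∃ y ∈ A ×ˢ Set.Ioi (0 : ℝ), T (x, 1) = c • (y, (1 : ℝ)) := by
  refine ⟨coneT p hp, fun x => ⟨?_, ?_⟩⟩
  · rintro ⟨a, ha, t, ht, rfl⟩
    refine ⟨t, ht.ne', (a, 1 / t), ⟨ha, by simpa using one_div_pos.mpr ht⟩, ?_⟩
    have hx2 : (p + t • (((a, (0 : ℝ)) : EuclideanSpace ℝ (Fin n) × ℝ) - p)).2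
        = (1 - t) * p.2 := by
      simp [Prod.snd_add, Prod.smul_snd]; ring
    have hx1 : (p + t • (((a, (0 : ℝ)) : EuclideanSpace ℝ (Fin n) × ℝ) - p)).1
        = p.1 + t • (a - p.1) := by
      simp
    show ((_ - _, _), _) = _
    rw [hx1, hx2]
    have hdiv : (1 - t) * p.2 / p.2 = 1 - t := by field_simp
    refine Prod.ext (Prod.ext ?_ ?_) ?_
    · show p.1 + t • (a - p.1) - ((1 - t) * p.2 / p.2) • p.1 = (t • ((a, 1 / t), (1:ℝ)).1).1
      rw [hdiv]
      show _ = t • a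
      rw [smul_sub, sub_smul, one_smul]
      abel
    · show (1 : ℝ) = t * (1 / t)
      field_simp
    · show 1 - (1 - t) * p.2 / p.2 = t * 1
      rw [hdiv]; ring
  · rintro ⟨c, hc, ⟨y1, y2⟩, ⟨hy1, hy2⟩, hT⟩
    obtain ⟨⟨e1, e2⟩, e3⟩ : (x.1 - (x.2 / p.2) • p.1 = c • y1 ∧ (1:ℝ) = c * y2)
        ∧ 1 - x.2 / p.2 = c * 1 := by
      have := hT
      simpa [coneT, Prod.ext_iff] using this
    have hy2' : (0:ℝ) < y2 := hy2
    have hcpos : 0 < c := by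
      rcases lt_trichotomy c 0 with h | h | h
      · nlinarith
      · simp [h] at e2
      · exact h
    refine ⟨y1, hy1, c, hcpos, ?_⟩
    have hx2 : x.2 = (1 - c) * p.2 := by
      have : x.2 / p.2 = 1 - c := by linarith [e3]
      field_simp at this
      linarith
    refine Prod.ext ?_ ?_
    · show x.1 = p.1 + c • ((y1, (0:ℝ)).1 - p.1)
      have : x.1 = c • y1 + (x.2 / p.2) • p.1 := by
        rw [← e1]; abel
      rw [this, hx2]
      have hdiv : (1 - c) * p.2 / p.2 = 1 - c := by field_simp
      rw [hdiv]
      show c • y1 + (1 - c) • p.1 = p.1 + c • (y1 - p.1)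
      rw [smul_sub, sub_smul, one_smul]
      abel
    · show x.2 = p.2 + c * ((0:ℝ) - p.2)
      rw [hx2]; ring
end
end
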